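/- (Proposition 1.) Let ψ₁, ψ₂ : [0, ∞) → ℝ be functions with ψ₁(h) ≥ ψ₂(h) for all h ≥ 0 (group 1 is at least as peaked as group 2 at every window width). Let w₁, w₂ ∈ (0, 1) with w₁ + w₂ = 1, and define V(h) = Var_w(ψ₁(h), ψ₂(h)). Suppose h* ≥ 0 satisfies: (i) for all h, h′ with 0 ≤ h < h′ ≤ h*, ψ₁(h′) − ψ₁(h) > ψ₂(h′) − ψ₂(h); and (ii) for all h, h′ with h* ≤ h < h′, ψ₁(h′) − ψ₁(h) ≤ ψ₂(h′) − ψ₂(h). Then V attains its maximum over [0, ∞) at h*: V(h) ≤ V(h*) for all h ≥ 0, and the inequality is strict whenever h < h*. -/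
import Mathlib


/-- Two-point weighted variance: `Var_w(x₁,x₂) = w₁(x₁-m)² + w₂(x₂-m)²` with
`m = w₁x₁ + w₂x₂`. -/
def varW (w₁ w₂ x₁ x₂ : ℝ) : ℝ :=
  w₁ * (x₁ - (w₁ * x₁ + w₂ * x₂)) ^ 2 + w₂ * (x₂ - (w₁ * x₁ + w₂ * x₂)) ^ 2

lemma varW_eq (w₁ w₂ x₁ x₂ : ℝ) (hsum : w₁ + w₂ = 1) :
    varW w₁ w₂ x₁ x₂ = w₁ * w₂ * (x₁ - x₂) ^ 2 := by
  have h2 : w₂ = 1 - w₁ := by linarith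
  subst h2
  unfold varW
  ring

/-- Proposition 1: In a two-group system where group 1 is at least as
peaked as group 2 at every window width, if increments of group 1 strictly exceed those
of group 2 below `h*` and are dominated by them above `h*`, then the two-group variance
`V(h) = Var_w(ψ₁(h), ψ₂(h))` attains its maximum over `[0, ∞)` at `h*`, strictly so
for `h < h*`, for any group proportions `w₁, w₂ ∈ (0, 1)` with `w₁ + w₂ = 1`. -/
theorem variance_maximised_at_hstar
    (ψ₁ ψ₂ : ℝ → ℝ) (hpeak : ∀ h : ℝ, 0 ≤ h → ψ₁ h ≥ ψ₂ h)
    (w₁ w₂ : ℝ) (hw₁ : w₁ ∈ Set.Ioo (0 : ℝ) 1) (hw₂ : w₂ ∈ Set.Ioo (0 : ℝ) 1)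
    (hsum : w₁ + w₂ = 1)
    (hstar : ℝ) (hstar_nonneg : 0 ≤ hstar)
    (hbelow : ∀ h h' : ℝ, 0 ≤ h → h < h' → h' ≤ hstar →
      ψ₁ h' - ψ₁ h > ψ₂ h' - ψ₂ h)
    (habove : ∀ h h' : ℝ, hstar ≤ h → h < h' →
      ψ₁ h' - ψ₁ h ≤ ψ₂ h' - ψ₂ h) :
    (∀ h : ℝ, 0 ≤ h →
      varW w₁ w₂ (ψ₁ h) (ψ₂ h) ≤ varW w₁ w₂ (ψ₁ hstar) (ψ₂ hstar)) ∧
    (∀ h : ℝ, 0 ≤ h → h < hstar →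
      varW w₁ w₂ (ψ₁ h) (ψ₂ h) < varW w₁ w₂ (ψ₁ hstar) (ψ₂ hstar)) := by
  have hw₁pos := hw₁.1
  have hw₂pos := hw₂.1
  have hwpos : 0 < w₁ * w₂ := mul_pos hw₁pos hw₂pos
  have hdstar : 0 ≤ ψ₁ hstar - ψ₂ hstar := by
    have := hpeak hstar hstar_nonneg; linarith
  have key := fun x₁ x₂ => varW_eq w₁ w₂ x₁ x₂ hsum
  constructor
  · intro h hh
    rw [key, key]
    have hd : 0 ≤ ψ₁ h - ψ₂ h := by have := hpeak h hh; linarith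
    rcases lt_trichotomy h hstar with hlt | heq | hgt
    · have := hbelow h hstar hh hlt le_rfl
      have hle : ψ₁ h - ψ₂ h ≤ ψ₁ hstar - ψ₂ hstar := by linarith
      exact mul_le_mul_of_nonneg_left (pow_le_pow_left₀ hd hle 2) hwpos.le
    · rw [heq]
    · have := habove hstar h le_rfl hgt
      have hle : ψ₁ h - ψ₂ h ≤ ψ₁ hstar - ψ₂ hstar := by linarith
      exact mul_le_mul_of_nonneg_left (pow_le_pow_left₀ hd hle 2) hwpos.le
  · intro h hh hlt
    rw [key, key]
    have hd : 0 ≤ ψ₁ h - ψ₂ h := by have := hpeak h hh; linarith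
    have := hbelow h hstar hh hlt le_rfl
    have hlt' : ψ₁ h - ψ₂ h < ψ₁ hstar - ψ₂ hstar := by linarith
    exact mul_lt_mul_of_pos_left (by nlinarith) hwpos
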